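/- Assume (H0) and let β > f'(0) > 0, c ∈ ℝ. With k₁ and k₂ as defined, for every z with 0 ≤ z < min(μ(c), γ#(c)) the function χ(z) := 1 − g'(0)·∫_ℝ (k₁*k₂)(s)·e^{−zs} ds − (β − f'(0))·∫_ℝ k₁(s)·e^{−zs} ds satisfies χ(z) = −χ₀(z,c)/(β + cz − z²), where χ₀(z,c) := z² − cz − f'(0) + g'(0)·∫₀^∞∫_ℝ K(s,w)·e^{−z(cs+w)} dw ds. In particular χ(0) = (f'(0) − g'(0))/β, which is negative whenever f'(0) < g'(0). -/

import Mathlib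

open MeasureTheory Filter Set
open scoped ENNReal

noncomputable section

/-- positive root `μ(c)` of `z² - cz - β = 0`. -/
def muRoot (β c : ℝ) : ℝ := (c + Real.sqrt (c ^ 2 + 4 * β)) / 2

/-- negative root `ν(c)` of `z² - cz - β = 0`. -/
def nuRoot (β c : ℝ) : ℝ := (c - Real.sqrt (c ^ 2 + 4 * β)) / 2

/-- the Green's function kernel `k₁`. -/
def k1 (β c : ℝ) (s : ℝ) : ℝ :=
  if 0 ≤ s then Real.exp (nuRoot β c * s) / Real.sqrt (c ^ 2 + 4 * β)
  else Real.exp (muRoot β c * s) / Real.sqrt (c ^ 2 + 4 * β)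

/-- the kernel `k₂(r) = ∫₀^∞ K(s, r - cs) ds`. -/
def k2 (K : ℝ → ℝ → ℝ) (c : ℝ) (r : ℝ) : ℝ := ∫ s in Set.Ioi (0:ℝ), K s (r - c * s)

/-- convolution of two functions on `ℝ`. -/
def conv (a b : ℝ → ℝ) (t : ℝ) : ℝ := ∫ r : ℝ, a (t - r) * b r

/-- `χ(z) = 1 - g'(0) ∫ (k₁*k₂)(s)e^{-zs} ds - (β - f'(0)) ∫ k₁(s)e^{-zs} ds`. -/
def chiFun (K : ℝ → ℝ → ℝ) (β c fd0 gd0 : ℝ) (z : ℝ) : ℝ :=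
  1 - gd0 * (∫ s : ℝ, conv (k1 β c) (k2 K c) s * Real.exp (-z * s)) -
    (β - fd0) * ∫ s : ℝ, k1 β c s * Real.exp (-z * s)

/-- `χ₀(z,c) = z² - cz - f'(0) + g'(0) ∫₀^∞∫_ℝ K(s,w) e^{-z(cs+w)}`. -/
def chi0 (K : ℝ → ℝ → ℝ) (fd0 gd0 : ℝ) (z c : ℝ) : ℝ :=
  z ^ 2 - c * z - fd0 +
    gd0 * ∫ s in Set.Ioi (0:ℝ), ∫ w : ℝ, K s w * Real.exp (-z * (c * s + w))

/-!
Everything is a bilateral Laplace transform `∫ f(s) e^{-zs} ds`. The transform of `k₁` is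
`1/((z - ν)(μ - z)) = 1/(β + cz - z²)`, that of `k₂` is the double integral in `χ₀` after the
shear `(s, r) ↦ (s, r - cs)`, and the transform of `k₁ * k₂` is the product of the two. The
identity for `χ` is then algebra, and at `z = 0` the double integral is the total mass `1` of `K`.
-/

lemma muRoot_sub_nuRoot (β c : ℝ) : muRoot β c - nuRoot β c = Real.sqrt (c ^ 2 + 4 * β) := by
  unfold muRoot nuRoot; ring

lemma abs_lt_sqrt_discr {β : ℝ} (hβ : 0 < β) (c : ℝ) : |c| < Real.sqrt (c ^ 2 + 4 * β) := by
  rw [← Real.sqrt_sq_eq_abs]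
  exact Real.sqrt_lt_sqrt (sq_nonneg c) (by linarith)

lemma muRoot_pos {β : ℝ} (hβ : 0 < β) (c : ℝ) : 0 < muRoot β c := by
  have := abs_lt_sqrt_discr hβ c
  unfold muRoot; linarith [neg_abs_le c]

lemma nuRoot_neg {β : ℝ} (hβ : 0 < β) (c : ℝ) : nuRoot β c < 0 := by
  have := abs_lt_sqrt_discr hβ c
  unfold nuRoot; linarith [le_abs_self c]

lemma add_mul_sub_sq_eq_mul {β c : ℝ} (h : 0 ≤ c ^ 2 + 4 * β) (z : ℝ) :
    β + c * z - z ^ 2 = (z - nuRoot β c) * (muRoot β c - z) := by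
  have := Real.sq_sqrt h
  unfold muRoot nuRoot; linear_combination (-1 / 4) * this

lemma integrableOn_exp_mul_compl_Ici {b : ℝ} (hb : 0 < b) :
    IntegrableOn (fun s : ℝ => Real.exp (b * s)) (Ici 0)ᶜ := by
  rw [compl_Ici, ← integrableOn_Iic_iff_integrableOn_Iio]
  exact integrableOn_exp_mul_Iic hb 0

lemma integrableOn_exp_mul_Ici {a : ℝ} (ha : a < 0) :
    IntegrableOn (fun s : ℝ => Real.exp (a * s)) (Ici 0) :=
  (integrableOn_Ici_iff_integrableOn_Ioi).2 (integrableOn_exp_mul_Ioi ha 0)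

lemma ite_exp_eq_piecewise (a b : ℝ) :
    (fun s : ℝ => if 0 ≤ s then Real.exp (a * s) else Real.exp (b * s)) =
      (Ici 0).piecewise (fun s => Real.exp (a * s)) (fun s => Real.exp (b * s)) := by
  ext s; simp [Set.piecewise]

lemma integrable_ite_exp_mul {a b : ℝ} (ha : a < 0) (hb : 0 < b) :
    Integrable fun s : ℝ => if 0 ≤ s then Real.exp (a * s) else Real.exp (b * s) := by
  rw [ite_exp_eq_piecewise]
  exact Integrable.piecewise measurableSet_Ici (integrableOn_exp_mul_Ici ha)
    (integrableOn_exp_mul_compl_Ici hb)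

lemma integral_ite_exp_mul {a b : ℝ} (ha : a < 0) (hb : 0 < b) :
    ∫ s : ℝ, (if 0 ≤ s then Real.exp (a * s) else Real.exp (b * s)) = 1 / b - 1 / a := by
  rw [ite_exp_eq_piecewise, integral_piecewise measurableSet_Ici (integrableOn_exp_mul_Ici ha)
    (integrableOn_exp_mul_compl_Ici hb), compl_Ici, integral_Ici_eq_integral_Ioi,
    ← integral_Iic_eq_integral_Iio, integral_exp_mul_Ioi ha, integral_exp_mul_Iic hb]
  simp [sub_eq_add_neg, add_comm, neg_div]

lemma k1_mul_exp (β c z s : ℝ) :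
    k1 β c s * Real.exp (-z * s) = (Real.sqrt (c ^ 2 + 4 * β))⁻¹ *
      if 0 ≤ s then Real.exp ((nuRoot β c - z) * s) else Real.exp ((muRoot β c - z) * s) := by
  unfold k1
  split_ifs <;> rw [sub_mul, sub_eq_add_neg, ← neg_mul, Real.exp_add] <;> ring

section GreenKernel

variable {β c z : ℝ}

lemma integrable_k1_mul_exp (hν : nuRoot β c < z) (hμ : z < muRoot β c) :
    Integrable fun s => k1 β c s * Real.exp (-z * s) := by
  simp_rw [k1_mul_exp]
  exact (integrable_ite_exp_mul (by linarith) (by linarith)).const_mul _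

lemma integral_k1_mul_exp (hν : nuRoot β c < z) (hμ : z < muRoot β c) :
    ∫ s, k1 β c s * Real.exp (-z * s) = 1 / (β + c * z - z ^ 2) := by
  have hσ : 0 < Real.sqrt (c ^ 2 + 4 * β) := by linarith [muRoot_sub_nuRoot β c]
  simp_rw [k1_mul_exp]
  rw [integral_const_mul, integral_ite_exp_mul (by linarith) (by linarith),
    add_mul_sub_sq_eq_mul (Real.sqrt_pos.1 hσ).le, ← muRoot_sub_nuRoot]
  have hνz : z - nuRoot β c ≠ 0 := by linarith
  have hμz : muRoot β c - z ≠ 0 := by linarith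
  have hνz' : nuRoot β c - z ≠ 0 := by linarith
  have hμν : muRoot β c - nuRoot β c ≠ 0 := by linarith
  field_simp
  ring

lemma add_mul_sub_sq_pos (hν : nuRoot β c < z) (hμ : z < muRoot β c) :
    0 < β + c * z - z ^ 2 := by
  have hσ : 0 < Real.sqrt (c ^ 2 + 4 * β) := by linarith [muRoot_sub_nuRoot β c]
  rw [add_mul_sub_sq_eq_mul (Real.sqrt_pos.1 hσ).le]
  exact mul_pos (by linarith) (by linarith)

end GreenKernel

lemma MeasureTheory.Integrable.comp_shear {E : Type*} [NormedAddCommGroup E] {μ : Measure ℝ}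
    [SFinite μ] {f : ℝ × ℝ → E} (hf : Integrable f (μ.prod volume)) (c : ℝ) :
    Integrable (fun p : ℝ × ℝ => f (p.1, p.2 - c * p.1)) (μ.prod volume) := by
  have hshear : MeasurePreserving (fun p : ℝ × ℝ => (p.1, p.2 - c * p.1))
      (μ.prod volume) (μ.prod volume) :=
    (MeasurePreserving.id μ).skew_product (g := fun a r => r - c * a)
      (measurable_snd.sub (measurable_fst.const_mul c))
      (ae_of_all _ fun a => by simpa only [sub_eq_add_neg] using map_add_right_eq_self volume _)
  exact hshear.integrable_comp_of_integrable hf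

lemma k2_mul_exp (K : ℝ → ℝ → ℝ) (c z r : ℝ) :
    k2 K c r * Real.exp (-z * r) = ∫ s in Ioi 0, K s (r - c * s) * Real.exp (-z * r) :=
  (integral_mul_const _ _).symm

section ShiftedKernel

variable {K : ℝ → ℝ → ℝ} {c z : ℝ}

lemma integrable_shear_mul_exp
    (hK : IntegrableOn (fun x : ℝ × ℝ => K x.1 x.2 * Real.exp (-z * (c * x.1 + x.2)))
      (Ioi 0 ×ˢ univ)) :
    Integrable (fun p : ℝ × ℝ => K p.1 (p.2 - c * p.1) * Real.exp (-z * p.2))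
      ((volume.restrict (Ioi 0)).prod volume) := by
  rw [IntegrableOn, Measure.volume_eq_prod, ← Measure.prod_restrict, Measure.restrict_univ] at hK
  simpa only [add_sub_cancel] using hK.comp_shear c

lemma integrable_k2_mul_exp
    (hK : IntegrableOn (fun x : ℝ × ℝ => K x.1 x.2 * Real.exp (-z * (c * x.1 + x.2)))
      (Ioi 0 ×ˢ univ)) :
    Integrable fun r => k2 K c r * Real.exp (-z * r) := by
  simp_rw [k2_mul_exp]
  exact (integrable_shear_mul_exp hK).swap.integral_prod_left

lemma integral_k2_mul_exp
    (hK : IntegrableOn (fun x : ℝ × ℝ => K x.1 x.2 * Real.exp (-z * (c * x.1 + x.2)))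
      (Ioi 0 ×ˢ univ)) :
    ∫ r, k2 K c r * Real.exp (-z * r) =
      ∫ s in Ioi 0, ∫ w, K s w * Real.exp (-z * (c * s + w)) := by
  simp_rw [k2_mul_exp]
  rw [← integral_integral_swap (integrable_shear_mul_exp hK)]
  refine setIntegral_congr_fun measurableSet_Ioi fun s _ => ?_
  rw [← integral_sub_right_eq_self (fun w => K s w * Real.exp (-z * (c * s + w))) (c * s)]
  simp only [add_sub_cancel]

end ShiftedKernel

lemma integral_conv_mul_exp {f g : ℝ → ℝ} {z : ℝ}
    (hf : Integrable fun s => f s * Real.exp (-z * s))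
    (hg : Integrable fun r => g r * Real.exp (-z * r)) :
    ∫ t, conv f g t * Real.exp (-z * t) =
      (∫ s, f s * Real.exp (-z * s)) * ∫ r, g r * Real.exp (-z * r) := by
  have hconv : ∀ t, conv f g t * Real.exp (-z * t) =
      convolution (fun r => g r * Real.exp (-z * r)) (fun s => f s * Real.exp (-z * s))
        (ContinuousLinearMap.mul ℝ ℝ) volume t := by
    intro t
    rw [conv, ← integral_mul_const, convolution_def]
    refine integral_congr_ae (ae_of_all _ fun r => ?_)
    simp only [ContinuousLinearMap.mul_apply']
    rw [show -z * t = -z * r + -z * (t - r) by ring, Real.exp_add]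
    ring
  simp_rw [hconv]
  rw [integral_convolution _ hg hf, mul_comm, ContinuousLinearMap.mul_apply']

theorem chi_identity_general
    (K : ℝ → ℝ → ℝ) (γsharp : ℝ → ℝ≥0∞) (β c fd0 gd0 : ℝ)
    -- (H0)
    (hKnorm : (∫ s in Set.Ioi (0:ℝ), ∫ w : ℝ, K s w) = 1)
    (hγpos : ∀ c', 0 < γsharp c')
    (hKconv : ∀ c' z : ℝ, 0 ≤ z → ENNReal.ofReal z < γsharp c' →
      IntegrableOn (fun x : ℝ × ℝ => K x.1 x.2 * Real.exp (-z * (c' * x.1 + x.2)))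
        (Set.Ioi 0 ×ˢ Set.univ))
    -- β > f'(0) > 0
    (hfd0 : 0 < fd0) (hβ : fd0 < β) :
    (∀ z : ℝ, 0 ≤ z → z < muRoot β c → ENNReal.ofReal z < γsharp c →
      chiFun K β c fd0 gd0 z = -(chi0 K fd0 gd0 z c) / (β + c * z - z ^ 2)) ∧
    chiFun K β c fd0 gd0 0 = (fd0 - gd0) / β ∧
    (fd0 < gd0 → chiFun K β c fd0 gd0 0 < 0) := by
  have hβ0 : 0 < β := hfd0.trans hβ
  have laplace : ∀ z : ℝ, 0 ≤ z → z < muRoot β c → ENNReal.ofReal z < γsharp c →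
      chiFun K β c fd0 gd0 z = -(chi0 K fd0 gd0 z c) / (β + c * z - z ^ 2) := by
    intro z hz hzμ hzγ
    have hzν : nuRoot β c < z := (nuRoot_neg hβ0 c).trans_le hz
    have hK := hKconv c z hz hzγ
    have hden := (add_mul_sub_sq_pos hzν hzμ).ne'
    rw [chiFun, chi0, integral_conv_mul_exp (integrable_k1_mul_exp hzν hzμ)
      (integrable_k2_mul_exp hK), integral_k1_mul_exp hzν hzμ, integral_k2_mul_exp hK]
    field_simp
    ring
  have at_zero : chiFun K β c fd0 gd0 0 = (fd0 - gd0) / β := by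
    rw [laplace 0 le_rfl (muRoot_pos hβ0 c) (by simpa using hγpos c), chi0]
    simp only [neg_zero, zero_mul, Real.exp_zero, mul_one, hKnorm]
    ring
  refine ⟨laplace, at_zero, fun hlt => ?_⟩
  rw [at_zero]
  exact div_neg_of_neg_of_pos (by linarith) hβ0

/-- The identity `χ(z) = -χ₀(z,c)/(β + cz - z²)`, and `χ(0) = (f'(0) - g'(0))/β`. -/
theorem chi_identity
    (K : ℝ → ℝ → ℝ) (γsharp : ℝ → ℝ≥0∞) (β c fd0 gd0 : ℝ)
    -- (H0)
    (hKmeas : Measurable fun x : ℝ × ℝ => K x.1 x.2)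
    (hKnn : ∀ s w, 0 ≤ K s w)
    (hKint : IntegrableOn (fun x : ℝ × ℝ => K x.1 x.2) (Set.Ioi 0 ×ˢ Set.univ))
    (hKnorm : (∫ s in Set.Ioi (0:ℝ), ∫ w : ℝ, K s w) = 1)
    (hγpos : ∀ c', 0 < γsharp c')
    (hKconv : ∀ c' z : ℝ, 0 ≤ z → ENNReal.ofReal z < γsharp c' →
      IntegrableOn (fun x : ℝ × ℝ => K x.1 x.2 * Real.exp (-z * (c' * x.1 + x.2)))
        (Set.Ioi 0 ×ˢ Set.univ))
    (hKdiv : ∀ c' z : ℝ, γsharp c' < ENNReal.ofReal z →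
      ¬ IntegrableOn (fun x : ℝ × ℝ => K x.1 x.2 * Real.exp (-z * (c' * x.1 + x.2)))
        (Set.Ioi 0 ×ˢ Set.univ))
    -- β > f'(0) > 0
    (hfd0 : 0 < fd0) (hβ : fd0 < β) :
    (∀ z : ℝ, 0 ≤ z → z < muRoot β c → ENNReal.ofReal z < γsharp c →
      chiFun K β c fd0 gd0 z = -(chi0 K fd0 gd0 z c) / (β + c * z - z ^ 2)) ∧
    chiFun K β c fd0 gd0 0 = (fd0 - gd0) / β ∧
    (fd0 < gd0 → chiFun K β c fd0 gd0 0 < 0) :=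
  chi_identity_general K γsharp β c fd0 gd0 hKnorm hγpos hKconv hfd0 hβ
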